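/- Fix ℏ > 0, let ψ : ℝ → ℂ be a Schwartz function, and let φ(p) = (2πℏ)^{−1/2} ∫_ℝ ψ(x) exp(−i p x / ℏ) dx be its ℏ-scaled Fourier transform. Then for every p ∈ ℝ, the position marginal of the Wigner function recovers the momentum density: ∫_ℝ W_ψ(q, p) dq = |φ(p)|². -/

import Mathlib

/-!
With `g x = ψ x e^{-ipx/ℏ}` one has `e^{ips} = e^{ip(u - v)/ℏ}` for `u = q + ℏs/2`, `v = q - ℏs/2`,
so the Wigner integrand is `conj (g u) * g v`. The linear substitution `(q, s) ↦ (u, v)` has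
determinant `-ℏ`, hence the double integral over `(q, s)` equals `|ℏ|⁻¹ ∫∫ conj (g u) g v du dv
= |ℏ|⁻¹ ‖∫ g‖²`, and `‖∫ g‖² = 2πℏ ‖φ p‖²`.
-/

open MeasureTheory

noncomputable def wigner (h : ℝ) (ψ : ℝ → ℂ) (q p : ℝ) : ℂ :=
  (1 / (2 * Real.pi) : ℂ) *
    ∫ s : ℝ, (starRingEnd ℂ) (ψ (q + h * s / 2)) * ψ (q - h * s / 2) *
      Complex.exp (Complex.I * (p : ℂ) * (s : ℂ))

namespace ContinuousLinearEquiv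

variable {E F : Type*} [NormedAddCommGroup E] [NormedSpace ℝ E] [MeasurableSpace E] [BorelSpace E]
  [FiniteDimensional ℝ E] {μ : Measure E} [μ.IsAddHaarMeasure] [NormedAddCommGroup F]

theorem map_addHaar (L : E ≃L[ℝ] E) :
    μ.map L = ENNReal.ofReal |(L : E →L[ℝ] E).det|⁻¹ • μ := by
  rw [← abs_inv]
  exact Measure.map_linearMap_addHaar_eq_smul_addHaar μ L.toLinearEquiv.isUnit_det'.ne_zero

theorem integrable_comp_iff_addHaar (L : E ≃L[ℝ] E) {g : E → F} :
    Integrable (g ∘ L) μ ↔ Integrable g μ := by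
  have hdet : (L : E →L[ℝ] E).det ≠ 0 := L.toLinearEquiv.isUnit_det'.ne_zero
  rw [← L.coe_toHomeomorph, ← L.toHomeomorph.measurableEmbedding.integrable_map_iff,
    coe_toHomeomorph, map_addHaar, integrable_smul_measure] <;> simp [hdet]

theorem integral_comp_addHaar [NormedSpace ℝ F] (L : E ≃L[ℝ] E) (g : E → F) :
    ∫ x, g (L x) ∂μ = |(L : E →L[ℝ] E).det|⁻¹ • ∫ y, g y ∂μ := by
  rw [← L.coe_toHomeomorph, ← L.toHomeomorph.measurableEmbedding.integral_map, coe_toHomeomorph,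
    map_addHaar, integral_smul_measure, ENNReal.toReal_ofReal (by positivity)]

end ContinuousLinearEquiv

noncomputable def wignerChart (ℏ : ℝ) : ℝ × ℝ →L[ℝ] ℝ × ℝ :=
  (ContinuousLinearMap.fst ℝ ℝ ℝ + (ℏ / 2) • ContinuousLinearMap.snd ℝ ℝ ℝ).prod
    (ContinuousLinearMap.fst ℝ ℝ ℝ - (ℏ / 2) • ContinuousLinearMap.snd ℝ ℝ ℝ)

theorem wignerChart_apply (ℏ : ℝ) (z : ℝ × ℝ) :
    wignerChart ℏ z = (z.1 + ℏ * z.2 / 2, z.1 - ℏ * z.2 / 2) := by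
  ext <;> simp [wignerChart] <;> ring

theorem det_wignerChart (ℏ : ℝ) : (wignerChart ℏ).det = -ℏ := by
  rw [ContinuousLinearMap.det, ← LinearMap.det_toMatrix (Module.Basis.finTwoProd ℝ),
    Matrix.det_fin_two]
  simp [LinearMap.toMatrix_apply, wignerChart_apply]
  ring

theorem conj_exp_mul_exp (ℏ : ℝ) (hℏ : ℏ ≠ 0) (p q s : ℝ) :
    (starRingEnd ℂ) (Complex.exp (-(Complex.I * p * ↑(q + ℏ * s / 2)) / ℏ)) *
      Complex.exp (-(Complex.I * p * ↑(q - ℏ * s / 2)) / ℏ) = Complex.exp (Complex.I * p * s) := by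
  have hℏ' : (ℏ : ℂ) ≠ 0 := by exact_mod_cast hℏ
  rw [← Complex.exp_conj, ← Complex.exp_add]
  congr 1
  simp only [map_div₀, map_neg, map_mul, Complex.conj_I, Complex.conj_ofReal]
  push_cast
  field_simp
  ring

theorem integrable_mul_exp_neg_I_mul {ψ : ℝ → ℂ} (hψ : Integrable ψ) (ℏ p : ℝ) :
    Integrable fun x : ℝ => ψ x * Complex.exp (-(Complex.I * p * x) / ℏ) := by
  refine hψ.mul_bdd (c := 1) (by fun_prop) (.of_forall fun x => ?_)
  rw [Complex.norm_exp]
  simp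

theorem integral_wigner_eq_norm_integral_sq (ℏ : ℝ) (hℏ : ℏ ≠ 0) {ψ : ℝ → ℂ} (hψ : Integrable ψ)
    (p : ℝ) :
    ∫ q, wigner ℏ ψ q p =
      ((2 * Real.pi * |ℏ|)⁻¹ : ℝ) * ‖∫ x, ψ x * Complex.exp (-(Complex.I * p * x) / ℏ)‖ ^ 2 := by
  set g := fun x : ℝ => ψ x * Complex.exp (-(Complex.I * p * x) / ℏ)
  have hg : Integrable g := integrable_mul_exp_neg_I_mul hψ ℏ p
  set G := fun z : ℝ × ℝ => (starRingEnd ℂ) (g z.1) * g z.2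
  have hdet : (wignerChart ℏ).det ≠ 0 := by simpa [det_wignerChart] using hℏ
  set L := (wignerChart ℏ).toContinuousLinearEquivOfDetNeZero hdet
  have hGL : Integrable (fun z => G (L z)) (volume.prod volume) :=
    L.integrable_comp_iff_addHaar.2 ((Complex.conjLIE.integrable_comp_iff.2 hg).mul_prod hg)
  have hG : ∫ z, G z = (starRingEnd ℂ) (∫ x, g x) * ∫ x, g x := by
    rw [← integral_conj]
    exact integral_prod_mul (fun x => (starRingEnd ℂ) (g x)) g
  calc ∫ q, wigner ℏ ψ q p = (1 / (2 * Real.pi) : ℂ) * ∫ q, ∫ s, G (L (q, s)) := by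
        simp only [wigner, integral_const_mul]
        congr 1
        refine integral_congr_ae (.of_forall fun q => integral_congr_ae (.of_forall fun s => ?_))
        simp only [G, g, L, ContinuousLinearMap.toContinuousLinearEquivOfDetNeZero_apply,
          wignerChart_apply, map_mul]
        rw [← conj_exp_mul_exp ℏ hℏ p q s]
        ring
    _ = (1 / (2 * Real.pi) : ℂ) * (|ℏ|⁻¹ • ∫ z, G z) := by
        rw [← integral_prod _ hGL, ← Measure.volume_eq_prod, L.integral_comp_addHaar]
        simp [L, det_wignerChart]
    _ = _ := by
        rw [hG, Complex.conj_mul', Complex.real_smul]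
        push_cast
        ring

/-- For `ℏ > 0`, a Schwartz function `ψ`, and its `ℏ`-scaled Fourier transform
`φ(p) = (2πℏ)^{-1/2} ∫ ψ(x) e^{-i p x / ℏ} dx`, the position marginal of the Wigner
function recovers the momentum density: `∫ W_ψ(q, p) dq = |φ(p)|²` for every `p`. -/
theorem stmt_15 (ℏ : ℝ) (hℏ : 0 < ℏ) (ψ : SchwartzMap ℝ ℂ) (φ : ℝ → ℂ)
    (hφ : ∀ p : ℝ, φ p = ((1 / Real.sqrt (2 * Real.pi * ℏ) : ℝ) : ℂ) *
      ∫ x : ℝ, ψ x * Complex.exp (-(Complex.I * (p : ℂ) * (x : ℂ)) / (ℏ : ℂ)))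
    (p : ℝ) :
    ∫ q : ℝ, wigner ℏ ψ q p = ((‖φ p‖ ^ 2 : ℝ) : ℂ) := by
  rw [integral_wigner_eq_norm_integral_sq ℏ hℏ.ne' ψ.integrable p, hφ p, norm_mul, mul_pow,
    Complex.norm_real, Real.norm_eq_abs, sq_abs, div_pow, one_pow,
    Real.sq_sqrt (by positivity), abs_of_pos hℏ]
  push_cast
  ring
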